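/- For every unit vector z ∈ ℂ³, the matrix η(z) = z·zᵗ + M(conj z), where M(w) is the skew-symmetric matrix with entries M₁₂ = −w₃, M₁₃ = w₂, M₂₃ = −w₁ (and Mⱼⱼ = 0, Mᵢⱼ = −Mⱼᵢ), is an element of SU(3). -/

import Mathlib

set_option maxHeartbeats 1000000

/-- Skew-symmetric 3×3 matrix with M₁₂ = −w₃, M₁₃ = w₂, M₂₃ = −w₁. -/
def skewM (w : Fin 3 → ℂ) : Matrix (Fin 3) (Fin 3) ℂ :=
  !![0, -w 2, w 1; w 2, 0, -w 0; -w 1, w 0, 0]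

/-- η(z) = z·zᵗ + M(conj z). -/
def eta (z : Fin 3 → ℂ) : Matrix (Fin 3) (Fin 3) ℂ :=
  Matrix.of (fun i j => z i * z j) + skewM (fun i => star (z i))

theorem eta_mem_SU3 (z : Fin 3 → ℂ) (hz : ∑ i, ‖z i‖ ^ 2 = 1) :
    eta z ∈ Matrix.specialUnitaryGroup (Fin 3) ℂ := by
  have h : z 0 * (starRingEnd ℂ) (z 0) + z 1 * (starRingEnd ℂ) (z 1)
      + z 2 * (starRingEnd ℂ) (z 2) = 1 := by
    simp only [Fin.sum_univ_three] at hz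
    have e : ∀ w : ℂ, w * (starRingEnd ℂ) w = ((‖w‖ ^ 2 : ℝ) : ℂ) := by
      intro w
      rw [Complex.mul_conj, Complex.normSq_eq_norm_sq]
    rw [e, e, e, ← Complex.ofReal_add, ← Complex.ofReal_add, hz, Complex.ofReal_one]
  rw [Matrix.mem_specialUnitaryGroup_iff]
  constructor
  · rw [Matrix.mem_unitaryGroup_iff]
    ext i j
    fin_cases i <;> fin_cases j <;>
      · simp [eta, skewM, Matrix.mul_apply, Fin.sum_univ_three, Matrix.one_apply,
          Matrix.conjTranspose_apply, Matrix.vecHead, Matrix.vecTail]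
        first
        | linear_combination (z 0 * (starRingEnd ℂ) (z 0) + 1) * h
        | linear_combination (z 1 * (starRingEnd ℂ) (z 1) + 1) * h
        | linear_combination (z 2 * (starRingEnd ℂ) (z 2) + 1) * h
        | linear_combination (z 0 * (starRingEnd ℂ) (z 1)) * h
        | linear_combination (z 0 * (starRingEnd ℂ) (z 2)) * h
        | linear_combination (z 1 * (starRingEnd ℂ) (z 0)) * h
        | linear_combination (z 1 * (starRingEnd ℂ) (z 2)) * h
        | linear_combination (z 2 * (starRingEnd ℂ) (z 0)) * h
        | linear_combination (z 2 * (starRingEnd ℂ) (z 1)) * h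
  · rw [Matrix.det_fin_three]
    simp [eta, skewM, Matrix.vecHead, Matrix.vecTail]
    linear_combination (z 0 * (starRingEnd ℂ) (z 0) + z 1 * (starRingEnd ℂ) (z 1)
      + z 2 * (starRingEnd ℂ) (z 2) + 1) * h
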